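/- arXiv:1502.06079 — 3 statements merged into one kernel-verified Lean document; each statement's English description precedes it below -/
import Mathlib

section
/- Let Q, c1 be axis-aligned cubes in ℝ³ such that c1 intersects Q but does not contain any corner of Q and does not intersect any edge of Q, and the side length of c1 is at most that of Q. Then either c1 ⊆ Q or c1 intersects exactly one face of Q. -/
/-- The vertices (corner points) of the axis-aligned box `∏ i, [a i, b i]` in `ℝ³`. -/
def boxVerts (a b : Fin 3 → ℝ) : Set (Fin 3 → ℝ) := {v | ∀ i, v i = a i ∨ v i = b i}

/-- `e` is an edge of the axis-aligned box `∏ i, [a i, b i]`. -/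
def IsBoxEdge (a b : Fin 3 → ℝ) (e : Set (Fin 3 → ℝ)) : Prop :=
  ∃ i : Fin 3, ∃ c : Fin 3 → ℝ, (∀ j, j ≠ i → c j = a j ∨ c j = b j) ∧
    e = {x | x i ∈ Set.Icc (a i) (b i) ∧ ∀ j, j ≠ i → x j = c j}

/-- `f` is a face of the axis-aligned box `∏ i, [a i, b i]`. -/
def IsBoxFace (a b : Fin 3 → ℝ) (f : Set (Fin 3 → ℝ)) : Prop :=
  ∃ i : Fin 3, ∃ t : ℝ, (t = a i ∨ t = b i) ∧
    f = {x | x i = t ∧ ∀ j, j ≠ i → x j ∈ Set.Icc (a j) (b j)}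

/-!
Call an axis `i` *crossed* when one of the two face-planes `x i = q i`, `x i = r i` of the box
`Q = [q, r]` meets the small box `C = [a, b]`. Two distinct axes cannot both be crossed: moving
a common point of `C` and `Q` onto both crossing planes gives a point of `C` on the edge of `Q`
parallel to the third axis. If no axis is crossed, `C ⊆ Q` coordinatewise. If exactly one axis
`i` is crossed, the faces of `Q` met by `C` are those orthogonal to `i` whose plane meets `C`;
when both of them do, `C` is no wider than `Q` along `i`, so `C` fills `Q` along `i` and again
`C ⊆ Q`.
-/

open Set

lemma Fin3.exists_ne_ne_of_ne (j k : Fin 3) (hjk : j ≠ k) :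
    ∃ i, i ≠ j ∧ i ≠ k ∧ ∀ m, m ≠ i → m = j ∨ m = k := by
  revert j k; decide

lemma le_and_le_of_mem_Icc_of_endpoints_notMem {a b q r x : ℝ} (hx : x ∈ Icc a b)
    (hx' : x ∈ Icc q r) (hq : q ∉ Icc a b) (hr : r ∉ Icc a b) : q ≤ a ∧ b ≤ r := by
  constructor
  · by_contra h
    exact hq ⟨(not_le.1 h).le, hx'.1.trans hx.2⟩
  · by_contra h
    exact hr ⟨hx.1.trans hx'.2, (not_le.1 h).le⟩

section Boxes

variable {a b q r x₀ : Fin 3 → ℝ}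

lemma crossed_axes_eq (hx₀ : x₀ ∈ Icc a b) (hx₀' : x₀ ∈ Icc q r)
    (hedge : ∀ e, IsBoxEdge q r e → Icc a b ∩ e = ∅) {j k : Fin 3} {tj tk : ℝ}
    (htj : tj = q j ∨ tj = r j) (htk : tk = q k ∨ tk = r k)
    (hj : tj ∈ Icc (a j) (b j)) (hk : tk ∈ Icc (a k) (b k)) : j = k := by
  by_contra hjk
  obtain ⟨i, hij, hik, hjk_cover⟩ := Fin3.exists_ne_ne_of_ne j k hjk
  set x := Function.update (Function.update x₀ j tj) k tk
  have hxj : x j = tj := by simp [x, hjk]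
  have hxk : x k = tk := by simp [x]
  have hxi : x i = x₀ i := by simp [x, hij, hik]
  have hxC : x ∈ Icc a b := by
    refine ⟨fun m => ?_, fun m => ?_⟩ <;>
    · by_cases hmk : m = k
      · subst hmk; simp [hxk, hk.1, hk.2]
      by_cases hmj : m = j
      · subst hmj; simp [hxj, hj.1, hj.2]
      simp only [x, Function.update_of_ne hmk, Function.update_of_ne hmj]
      first | exact hx₀.1 m | exact hx₀.2 m
  have hedge_x : IsBoxEdge q r {y | y i ∈ Icc (q i) (r i) ∧ ∀ m, m ≠ i → y m = x m} := by
    refine ⟨i, x, fun m hm => ?_, rfl⟩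
    rcases hjk_cover m hm with rfl | rfl
    · rwa [hxj]
    · rwa [hxk]
  have hxe : x ∈ {y | y i ∈ Icc (q i) (r i) ∧ ∀ m, m ≠ i → y m = x m} :=
    ⟨hxi ▸ ⟨hx₀'.1 i, hx₀'.2 i⟩, fun _ _ => rfl⟩
  exact (eq_empty_iff_forall_notMem.1 (hedge _ hedge_x)) x ⟨hxC, hxe⟩

lemma Icc_inter_boxFace_nonempty_iff (hx₀ : x₀ ∈ Icc a b) (hx₀' : x₀ ∈ Icc q r) (i : Fin 3)
    (t : ℝ) : (Icc a b ∩ {x | x i = t ∧ ∀ j, j ≠ i → x j ∈ Icc (q j) (r j)}).Nonempty ↔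
      t ∈ Icc (a i) (b i) := by
  constructor
  · rintro ⟨y, hy, hyi, -⟩
    exact hyi ▸ ⟨hy.1 i, hy.2 i⟩
  · intro ht
    refine ⟨Function.update x₀ i t, ⟨fun m => ?_, fun m => ?_⟩, by simp, fun j hj => ?_⟩
    · rcases eq_or_ne m i with rfl | hm
      · simpa using ht.1
      · simpa [hm] using hx₀.1 m
    · rcases eq_or_ne m i with rfl | hm
      · simpa using ht.2
      · simpa [hm] using hx₀.2 m
    · simpa [hj] using And.intro (hx₀'.1 j) (hx₀'.2 j)

theorem Icc_subset_or_existsUnique_boxFace (hwidth : ∀ i, b i - a i ≤ r i - q i)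
    (hmeet : (Icc a b ∩ Icc q r).Nonempty) (hedge : ∀ e, IsBoxEdge q r e → Icc a b ∩ e = ∅) :
    Icc a b ⊆ Icc q r ∨ ∃! f, IsBoxFace q r f ∧ (Icc a b ∩ f).Nonempty := by
  obtain ⟨x₀, hx₀, hx₀'⟩ := hmeet
  have hfit : ∀ m, q m ∉ Icc (a m) (b m) → r m ∉ Icc (a m) (b m) → q m ≤ a m ∧ b m ≤ r m :=
    fun m => le_and_le_of_mem_Icc_of_endpoints_notMem ⟨hx₀.1 m, hx₀.2 m⟩ ⟨hx₀'.1 m, hx₀'.2 m⟩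
  by_cases hcross : ∃ i t, (t = q i ∨ t = r i) ∧ t ∈ Icc (a i) (b i)
  swap
  · push Not at hcross
    have h := fun m => hfit m (hcross m _ (.inl rfl)) (hcross m _ (.inr rfl))
    exact .inl (Icc_subset_Icc (fun m => (h m).1) (fun m => (h m).2))
  obtain ⟨i, t, ht, hti⟩ := hcross
  have honly : ∀ k t', (t' = q k ∨ t' = r k) → t' ∈ Icc (a k) (b k) → k = i :=
    fun _ _ ht' htk => crossed_axes_eq hx₀ hx₀' hedge ht' ht htk hti
  have hfit' : ∀ m, m ≠ i → q m ≤ a m ∧ b m ≤ r m := fun m hm =>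
    hfit m (fun h => hm (honly m _ (.inl rfl) h)) (fun h => hm (honly m _ (.inr rfl) h))
  by_cases hboth : q i ∈ Icc (a i) (b i) ∧ r i ∈ Icc (a i) (b i)
  · left
    have := hwidth i
    refine Icc_subset_Icc (fun m => ?_) (fun m => ?_) <;> rcases eq_or_ne m i with rfl | hm
    · linarith [hboth.1.1, hboth.2.2]
    · exact (hfit' m hm).1
    · linarith [hboth.1.1, hboth.2.2]
    · exact (hfit' m hm).2
  · right
    refine ⟨_, ⟨⟨i, t, ht, rfl⟩, (Icc_inter_boxFace_nonempty_iff hx₀ hx₀' i t).2 hti⟩, ?_⟩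
    rintro f ⟨⟨k, t', ht', rfl⟩, hmeet⟩
    have htk := (Icc_inter_boxFace_nonempty_iff hx₀ hx₀' k t').1 hmeet
    obtain rfl := honly k t' ht' htk
    have : t' = t := by
      rcases ht with rfl | rfl <;> rcases ht' with rfl | rfl
      all_goals first | rfl | exact (hboth ⟨htk, hti⟩).elim | exact (hboth ⟨hti, htk⟩).elim
    rw [this]

end Boxes

theorem stmt4_general (q a : Fin 3 → ℝ) (sQ s : ℝ) (hsQ : s ≤ sQ)
    (Q c1 : Set (Fin 3 → ℝ))
    (hQ : Q = Set.Icc q (fun i => q i + sQ))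
    (hc1 : c1 = Set.Icc a (fun i => a i + s))
    (hmeet : (c1 ∩ Q).Nonempty)
    (hedge : ∀ e, IsBoxEdge q (fun i => q i + sQ) e → c1 ∩ e = ∅) :
    c1 ⊆ Q ∨ ∃! f, IsBoxFace q (fun i => q i + sQ) f ∧ (c1 ∩ f).Nonempty := by
  subst hQ hc1
  exact Icc_subset_or_existsUnique_boxFace (fun i => by linarith) hmeet hedge

/-- Let `Q` and `c1` be axis-aligned cubes in `ℝ³` with `side(c1) ≤ side(Q)`,
such that `c1` intersects `Q`, contains no corner of `Q`, and intersects no edge of `Q`.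
Then either `c1 ⊆ Q` or `c1` intersects exactly one face of `Q`. -/
theorem stmt4 (q a : Fin 3 → ℝ) (sQ s : ℝ) (hs : 0 < s) (hsQ : s ≤ sQ)
    (Q c1 : Set (Fin 3 → ℝ))
    (hQ : Q = Set.Icc q (fun i => q i + sQ))
    (hc1 : c1 = Set.Icc a (fun i => a i + s))
    (hmeet : (c1 ∩ Q).Nonempty)
    (hcorner : ∀ v ∈ boxVerts q (fun i => q i + sQ), v ∉ c1)
    (hedge : ∀ e, IsBoxEdge q (fun i => q i + sQ) e → c1 ∩ e = ∅) :
    c1 ⊆ Q ∨ ∃! f, IsBoxFace q (fun i => q i + sQ) f ∧ (c1 ∩ f).Nonempty :=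
  stmt4_general q a sQ s hsQ Q c1 hQ hc1 hmeet hedge
end

section
/- Let Q and c be axis-aligned cubes in ℝ³ with side length of c at most that of Q. If c intersects two distinct edges of Q, then c contains a corner of Q. -/
open Set Function

theorem Set.update_mem_Icc {ι : Type*} [DecidableEq ι] {α : ι → Type*} [∀ i, Preorder (α i)]
    {a b x : ∀ i, α i} (hx : x ∈ Icc a b) {i : ι} {t : α i} (ht : t ∈ Icc (a i) (b i)) :
    update x i t ∈ Icc a b := by
  rw [← pi_univ_Icc] at hx ⊢
  exact (update_mem_pi_iff_of_mem hx).2 fun _ => ht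

section OrderedGroup

variable {α : Type*} [AddCommGroup α] [LinearOrder α] [IsOrderedAddMonoid α]

theorem length_le_of_endpoints_mem_Icc {a s p l x y : α} (hx : x ∈ Icc a (a + s))
    (hy : y ∈ Icc a (a + s)) (hxp : x = p ∨ x = p + l) (hyp : y = p ∨ y = p + l) (hxy : x ≠ y) :
    l ≤ s := by
  have key {u : α} (hu : u ∈ Icc a (a + s)) (hul : u + l ∈ Icc a (a + s)) : l ≤ s :=
    le_of_add_le_add_left (hul.2.trans (add_le_add_left hu.1 s))
  rcases hxp with rfl | rfl <;> rcases hyp with rfl | rfl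
  · exact absurd rfl hxy
  · exact key hx hy
  · exact key hy hx
  · exact absurd rfl hxy

theorem left_mem_or_right_mem_Icc_of_length_le {a s p l x : α} (hxa : x ∈ Icc a (a + s))
    (hxp : x ∈ Icc p (p + l)) (hls : l ≤ s) :
    p ∈ Icc a (a + s) ∨ p + l ∈ Icc a (a + s) := by
  rcases le_or_gt a p with hap | hpa
  · exact Or.inl ⟨hap, hxp.1.trans hxa.2⟩
  · exact Or.inr ⟨hxa.1.trans hxp.2, add_le_add hpa.le hls⟩

end OrderedGroup

theorem exists_ne_of_setOf_ne {ι β : Type*} {i : ι} {P : (ι → β) → Prop} {c₁ c₂ : ι → β}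
    (hne : {x | P x ∧ ∀ j, j ≠ i → x j = c₁ j} ≠ {x | P x ∧ ∀ j, j ≠ i → x j = c₂ j}) :
    ∃ j ≠ i, c₁ j ≠ c₂ j := by
  by_contra! h
  exact hne (by ext; simp +contextual [h])

theorem update_mem_boxVerts {a b x : Fin 3 → ℝ} {i : Fin 3} {t : ℝ}
    (hx : ∀ j ≠ i, x j = a j ∨ x j = b j) (ht : t = a i ∨ t = b i) :
    update x i t ∈ boxVerts a b := by
  intro j
  rcases eq_or_ne j i with rfl | hj
  · simpa using ht
  · simpa [hj] using hx j hj

theorem stmt5_general (q a : Fin 3 → ℝ) (sQ s : ℝ)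
    (c : Set (Fin 3 → ℝ))
    (hc : c = Set.Icc a (fun i => a i + s))
    (e1 e2 : Set (Fin 3 → ℝ))
    (he1 : IsBoxEdge q (fun i => q i + sQ) e1) (he2 : IsBoxEdge q (fun i => q i + sQ) e2)
    (hne : e1 ≠ e2) (hm1 : (c ∩ e1).Nonempty) (hm2 : (c ∩ e2).Nonempty) :
    ∃ v ∈ boxVerts q (fun i => q i + sQ), v ∈ c := by
  obtain ⟨i, c₁, hc₁, rfl⟩ := he1
  obtain ⟨i', c₂, hc₂, rfl⟩ := he2
  subst hc
  obtain ⟨x, hxc, hxi, hx⟩ := hm1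
  obtain ⟨y, hyc, -, hy⟩ := hm2
  have hx_vert : ∀ j ≠ i, x j = q j ∨ x j = q j + sQ := fun j hj => hx j hj ▸ hc₁ j hj
  have hy_vert : ∀ j ≠ i', y j = q j ∨ y j = q j + sQ := fun j hj => hy j hj ▸ hc₂ j hj
  have hc_coord {z : Fin 3 → ℝ} (hz : z ∈ Icc a fun k => a k + s) (j : Fin 3) :
      z j ∈ Icc (a j) (a j + s) := ⟨hz.1 j, hz.2 j⟩
  by_cases hii' : i = i'
  · subst hii'
    obtain ⟨j, hji, hc₁₂⟩ := exists_ne_of_setOf_ne hne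
    have hside : sQ ≤ s := length_le_of_endpoints_mem_Icc (hc_coord hxc j) (hc_coord hyc j)
      (hx_vert j hji) (hy_vert j hji) (by rwa [hx j hji, hy j hji])
    rcases left_mem_or_right_mem_Icc_of_length_le (hc_coord hxc i) hxi hside with ht | ht
    · exact ⟨update x i (q i), update_mem_boxVerts hx_vert (.inl rfl), update_mem_Icc hxc ht⟩
    · exact ⟨update x i (q i + sQ), update_mem_boxVerts hx_vert (.inr rfl), update_mem_Icc hxc ht⟩
  · exact ⟨update x i (y i), update_mem_boxVerts hx_vert (hy_vert i hii'),
      update_mem_Icc hxc (hc_coord hyc i)⟩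

/-- If `Q` and `c` are axis-aligned cubes in `ℝ³` with `side(c) ≤ side(Q)`
and `c` intersects two distinct edges of `Q`, then `c` contains a corner of `Q`. -/
theorem stmt5 (q a : Fin 3 → ℝ) (sQ s : ℝ) (hs : 0 < s) (hsQ : s ≤ sQ)
    (Q c : Set (Fin 3 → ℝ))
    (hQ : Q = Set.Icc q (fun i => q i + sQ))
    (hc : c = Set.Icc a (fun i => a i + s))
    (e1 e2 : Set (Fin 3 → ℝ))
    (he1 : IsBoxEdge q (fun i => q i + sQ) e1) (he2 : IsBoxEdge q (fun i => q i + sQ) e2)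
    (hne : e1 ≠ e2) (hm1 : (c ∩ e1).Nonempty) (hm2 : (c ∩ e2).Nonempty) :
    ∃ v ∈ boxVerts q (fun i => q i + sQ), v ∈ c :=
  stmt5_general q a sQ s c hc e1 e2 he1 he2 hne hm1 hm2
end

section
/- Let Q be an axis-aligned rectangle and let R be an axis-aligned rectangle such that R ∩ Q ≠ ∅, R contains no corner of Q, and no edge of R has an endpoint in Q. Then R crosses Q completely in one direction: either the two vertical edges of R both cross Q from top to bottom, or the two horizontal edges of R both cross Q from left to right, or Q ⊆ R. -/
/-!
Compare the rectangles along the x-axis. At the left ends, either the left edge of `R` lies over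
`[x1, x2]` or the left edge of `Q` lies over `[a, b]`. In the first case the endpoints of that
edge of `R` lie outside `Q`, which forces `c < y1` and `y2 < d`; in the second case the corners
of `Q` on that edge lie outside `R`, which forces `y1 < c` and `d < y2`. Comparing the right ends
the same way, the two mixed cases put a corner of `Q` into `R` or a vertex of `R` into `Q`.
-/

open Set

theorem left_mem_Icc_or_left_mem_Icc {α : Type*} [LinearOrder α] {a b x₁ x₂ : α}
    (ha : a ≤ x₂) (hb : x₁ ≤ b) :
    a ∈ Icc x₁ x₂ ∨ x₁ ∈ Icc a b := by
  rcases le_or_gt x₁ a with h | h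
  · exact Or.inl ⟨h, ha⟩
  · exact Or.inr ⟨h.le, hb⟩

theorem right_mem_Icc_or_right_mem_Icc {α : Type*} [LinearOrder α] {a b x₁ x₂ : α}
    (ha : a ≤ x₂) (hb : x₁ ≤ b) :
    b ∈ Icc x₁ x₂ ∨ x₂ ∈ Icc a b := by
  rcases le_or_gt b x₂ with h | h
  · exact Or.inl ⟨hb, h⟩
  · exact Or.inr ⟨ha, h.le⟩

theorem lt_and_lt_of_mk_notMem_prod {α β : Type*} [LinearOrder β] {u : α} {c d y₁ y₂ : β}
    {s : Set α} (hu : u ∈ s) (hc : c ≤ y₂) (hd : y₁ ≤ d)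
    (huc : (u, c) ∉ s ×ˢ Icc y₁ y₂) (hud : (u, d) ∉ s ×ˢ Icc y₁ y₂) :
    c < y₁ ∧ y₂ < d :=
  ⟨lt_of_not_ge fun h => huc ⟨hu, h, hc⟩, lt_of_not_ge fun h => hud ⟨hu, hd, h⟩⟩

theorem stmt6_general (a b c d x1 x2 y1 y2 : ℝ)
    (R Q : Set (ℝ × ℝ))
    (hR : R = Set.Icc a b ×ˢ Set.Icc c d)
    (hQ : Q = Set.Icc x1 x2 ×ˢ Set.Icc y1 y2)
    (hne : (R ∩ Q).Nonempty)
    (hcorner : (x1, y1) ∉ R ∧ (x1, y2) ∉ R ∧ (x2, y1) ∉ R ∧ (x2, y2) ∉ R)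
    (hvert : (a, c) ∉ Q ∧ (a, d) ∉ Q ∧ (b, c) ∉ Q ∧ (b, d) ∉ Q) :
    ((x1 ≤ a ∧ a ≤ x2 ∧ c ≤ y1 ∧ y2 ≤ d) ∧ (x1 ≤ b ∧ b ≤ x2 ∧ c ≤ y1 ∧ y2 ≤ d)) ∨
    ((y1 ≤ c ∧ c ≤ y2 ∧ a ≤ x1 ∧ x2 ≤ b) ∧ (y1 ≤ d ∧ d ≤ y2 ∧ a ≤ x1 ∧ x2 ≤ b)) ∨
    Q ⊆ R := by
  subst hR hQ
  obtain ⟨_, ⟨⟨hap, hpb⟩, hcq, hqd⟩, ⟨hx1p, hpx2⟩, hy1q, hqy2⟩ := hne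
  have hax2 : a ≤ x2 := hap.trans hpx2
  have hx1b : x1 ≤ b := hx1p.trans hpb
  have hcy2 : c ≤ y2 := hcq.trans hqy2
  have hy1d : y1 ≤ d := hy1q.trans hqd
  obtain ⟨hk1, hk2, hk3, -⟩ := hcorner
  obtain ⟨hv1, hv2, hv3, -⟩ := hvert
  rcases left_mem_Icc_or_left_mem_Icc hax2 hx1b with haX | hx1I <;>
    rcases right_mem_Icc_or_right_mem_Icc hax2 hx1b with hbX | hx2I
  · obtain ⟨hcy1, hy2d⟩ := lt_and_lt_of_mk_notMem_prod haX hcy2 hy1d hv1 hv2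
    exact Or.inl ⟨⟨haX.1, haX.2, hcy1.le, hy2d.le⟩, hbX.1, hbX.2, hcy1.le, hy2d.le⟩
  · obtain ⟨hcy1, -⟩ := lt_and_lt_of_mk_notMem_prod haX hcy2 hy1d hv1 hv2
    exact absurd ⟨hx2I, hcy1.le, hy1d⟩ hk3
  · obtain ⟨hy1c, -⟩ := lt_and_lt_of_mk_notMem_prod hx1I hy1d hcy2 hk1 hk2
    exact absurd ⟨hbX, hy1c.le, hcy2⟩ hv3
  · obtain ⟨hy1c, hdy2⟩ := lt_and_lt_of_mk_notMem_prod hx1I hy1d hcy2 hk1 hk2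
    exact Or.inr <| Or.inl ⟨⟨hy1c.le, hcy2, hx1I.1, hx2I.2⟩, hy1d, hdy2.le, hx1I.1, hx2I.2⟩

/-- Let `Q = [x1,x2]×[y1,y2]` and `R = [a,b]×[c,d]` be axis-aligned rectangles
with `R ∩ Q ≠ ∅`, such that `R` contains no corner of `Q` and no vertex of `R` (endpoint of an
edge of `R`) lies in `Q`. Then either both vertical edges of `R` cross `Q` from top to bottom,
or both horizontal edges of `R` cross `Q` from left to right, or `Q ⊆ R`. -/
theorem stmt6 (a b c d x1 x2 y1 y2 : ℝ)
    (hab : a < b) (hcd : c < d) (hx : x1 < x2) (hy : y1 < y2)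
    (R Q : Set (ℝ × ℝ))
    (hR : R = Set.Icc a b ×ˢ Set.Icc c d)
    (hQ : Q = Set.Icc x1 x2 ×ˢ Set.Icc y1 y2)
    (hne : (R ∩ Q).Nonempty)
    (hcorner : (x1, y1) ∉ R ∧ (x1, y2) ∉ R ∧ (x2, y1) ∉ R ∧ (x2, y2) ∉ R)
    (hvert : (a, c) ∉ Q ∧ (a, d) ∉ Q ∧ (b, c) ∉ Q ∧ (b, d) ∉ Q) :
    ((x1 ≤ a ∧ a ≤ x2 ∧ c ≤ y1 ∧ y2 ≤ d) ∧ (x1 ≤ b ∧ b ≤ x2 ∧ c ≤ y1 ∧ y2 ≤ d)) ∨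
    ((y1 ≤ c ∧ c ≤ y2 ∧ a ≤ x1 ∧ x2 ≤ b) ∧ (y1 ≤ d ∧ d ≤ y2 ∧ a ≤ x1 ∧ x2 ≤ b)) ∨
    Q ⊆ R :=
  stmt6_general a b c d x1 x2 y1 y2 R Q hR hQ hne hcorner hvert
end
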